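/- arXiv:1811.12031 — 2 statements merged into one kernel-verified Lean document; each statement's English description precedes it below -/
import Mathlib

section
/- For every integer n ≥ 5, the second largest distance Pareto eigenvalue of the wheel graph W_n satisfies ρ₂(W_n) = 2(n − 3). -/
open Matrix SimpleGraph

/-- `x` is a (unit-normalizable) Pareto eigenvector of `A` associated with `lam`:
`x` is nonzero, entrywise nonnegative, `A x ≥ lam • x` entrywise, and
`lam = xᵀAx / xᵀx`. -/
def IsParetoEigenpair {n : ℕ} (A : Matrix (Fin n) (Fin n) ℝ) (lam : ℝ) (x : Fin n → ℝ) : Prop :=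
  x ≠ 0 ∧ (∀ i, 0 ≤ x i) ∧ (∀ i, lam * x i ≤ A.mulVec x i) ∧
    lam = (x ⬝ᵥ A.mulVec x) / (x ⬝ᵥ x)

/-- `lam` is a Pareto eigenvalue of `A`. -/
def IsParetoEigenvalue {n : ℕ} (A : Matrix (Fin n) (Fin n) ℝ) (lam : ℝ) : Prop :=
  ∃ x, IsParetoEigenpair A lam x

/-- The distance matrix of a graph on `Fin n`, as a real matrix. -/
noncomputable def distMatrix {n : ℕ} (G : SimpleGraph (Fin n)) : Matrix (Fin n) (Fin n) ℝ :=
  fun i j => (G.dist i j : ℝ)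

/-- The set `Π(G)` of distance Pareto eigenvalues of `G`. -/
def distParetoSet {n : ℕ} (G : SimpleGraph (Fin n)) : Set ℝ :=
  {lam | IsParetoEigenvalue (distMatrix G) lam}

/-- `a` is the `k`-th largest element of the (finite) set `S`. -/
def IsKthLargest (S : Set ℝ) (k : ℕ) (a : ℝ) : Prop :=
  a ∈ S ∧ {x ∈ S | a < x}.ncard = k - 1

/-- `a` is the `k`-th smallest element of the (finite) set `S`. -/
def IsKthSmallest (S : Set ℝ) (k : ℕ) (a : ℝ) : Prop :=
  a ∈ S ∧ {x ∈ S | x < a}.ncard = k - 1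

/-- The star graph `S_n` on `n` vertices: vertex `0` is adjacent to all others. -/
def starGraph (n : ℕ) : SimpleGraph (Fin n) where
  Adj i j := i ≠ j ∧ (i.val = 0 ∨ j.val = 0)
  symm := ⟨fun i j h => ⟨h.1.symm, h.2.symm⟩⟩
  loopless := ⟨fun i h => h.1 rfl⟩

/-- The graph `S_n⁺`: the star `S_n` plus one edge between the pendant vertices `1` and `2`. -/
def starPlusGraph (n : ℕ) : SimpleGraph (Fin n) where
  Adj i j := i ≠ j ∧
    ((i.val = 0 ∨ j.val = 0) ∨ (i.val = 1 ∧ j.val = 2) ∨ (i.val = 2 ∧ j.val = 1))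
  symm := ⟨fun i j h => ⟨h.1.symm, by tauto⟩⟩
  loopless := ⟨fun i h => h.1 rfl⟩

/-- The wheel graph `W_n` on `n` vertices: hub `0` joined to the cycle `1 - 2 - ⋯ - (n-1) - 1`. -/
def wheelGraph (n : ℕ) : SimpleGraph (Fin n) where
  Adj i j := i ≠ j ∧ (i.val = 0 ∨ j.val = 0 ∨
    i.val + 1 = j.val ∨ j.val + 1 = i.val ∨
    (i.val = 1 ∧ j.val = n - 1) ∨ (j.val = 1 ∧ i.val = n - 1))
  symm := ⟨fun i j h => ⟨h.1.symm, by tauto⟩⟩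
  loopless := ⟨fun i h => h.1 rfl⟩

/-- `K₄ - e`: the complete graph on 4 vertices minus the edge `{0,1}`. -/
def k4MinusE : SimpleGraph (Fin 4) where
  Adj i j := i ≠ j ∧ ¬((i.val = 0 ∧ j.val = 1) ∨ (i.val = 1 ∧ j.val = 0))
  symm := ⟨fun i j h => ⟨h.1.symm, by tauto⟩⟩
  loopless := ⟨fun i h => h.1 rfl⟩

/-- `C₃ * C₃`: two triangles `{0,1,2}` and `{0,3,4}` glued at the common vertex `0`. -/
def c3c3Graph : SimpleGraph (Fin 5) where
  Adj i j := i ≠ j ∧ (i.val = 0 ∨ j.val = 0 ∨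
    (i.val ≤ 2 ∧ j.val ≤ 2) ∨ (3 ≤ i.val ∧ 3 ≤ j.val))
  symm := ⟨fun i j h => ⟨h.1.symm, by tauto⟩⟩
  loopless := ⟨fun i h => h.1 rfl⟩

/-!
Every entry of `D(W_n)` is `0`, `1` or `2`, and each vertex has transmission (row sum) at most
`2n - 5`. If a Pareto eigenvector vanishes at some vertex, comparing the Pareto inequality at
its largest coordinate with the row sum minus that (nonzero) column gives `λ ≤ 2(n - 3)`, and
`(0, 1, …, 1)` attains this value. A Pareto eigenvalue above `2(n - 3)` thus has a positive
eigenvector, hence is a true eigenvalue with a positive eigenvector; for a symmetric matrix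
there is only one such, the Perron root, carried by `(a, 1, …, 1)` with
`(a + 2(n - 3)) a = n - 1`.
-/

open Finset

section ParetoEigenpair

variable {N : ℕ} {A : Matrix (Fin N) (Fin N) ℝ} {lam : ℝ} {x : Fin N → ℝ}

theorem isParetoEigenpair_iff_complementarity :
    IsParetoEigenpair A lam x ↔ x ≠ 0 ∧ (∀ i, 0 ≤ x i) ∧ (∀ i, lam * x i ≤ (A *ᵥ x) i) ∧
      ∀ i, x i * ((A *ᵥ x) i - lam * x i) = 0 := by
  have hgap : ∑ i, x i * ((A *ᵥ x) i - lam * x i) = x ⬝ᵥ A *ᵥ x - lam * (x ⬝ᵥ x) := by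
    simp only [dotProduct, mul_sub, sum_sub_distrib, mul_sum]
    congr 1
    exact sum_congr rfl fun i _ => by ring
  refine and_congr_right fun hx => and_congr_right fun hx0 => and_congr_right fun hle => ?_
  have hxx : x ⬝ᵥ x ≠ 0 := fun h => hx (dotProduct_self_eq_zero.mp h)
  have hterm : ∀ i ∈ univ, 0 ≤ x i * ((A *ᵥ x) i - lam * x i) :=
    fun i _ => mul_nonneg (hx0 i) (sub_nonneg.mpr (hle i))
  have hsum := sum_eq_zero_iff_of_nonneg hterm
  simp only [mem_univ, forall_const] at hsum
  rw [← hsum, hgap, sub_eq_zero, eq_div_iff hxx, eq_comm]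

theorem IsParetoEigenpair.mulVec_eq_of_pos (hp : IsParetoEigenpair A lam x)
    (hpos : ∀ i, 0 < x i) : A *ᵥ x = lam • x := by
  obtain ⟨-, -, -, hcompl⟩ := isParetoEigenpair_iff_complementarity.mp hp
  ext i
  have := (mul_eq_zero.mp (hcompl i)).resolve_left (hpos i).ne'
  simpa [sub_eq_zero] using this

theorem IsParetoEigenpair.le_of_apply_eq_zero (hA : ∀ i j, 0 ≤ A i j)
    (hp : IsParetoEigenpair A lam x) {v : Fin N} (hv : x v = 0) {c : ℝ}
    (hc : ∀ i, i ≠ v → ∑ j ∈ univ.erase v, A i j ≤ c) : lam ≤ c := by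
  obtain ⟨hx, hx0, hle, -⟩ := hp
  obtain ⟨i, -, hmax⟩ := exists_max_image univ x ⟨v, mem_univ v⟩
  obtain ⟨w, hw⟩ := Function.ne_iff.mp hx
  have hi : 0 < x i := ((hx0 w).lt_of_ne (Ne.symm hw)).trans_le (hmax w (mem_univ w))
  have hiv : i ≠ v := by rintro rfl; exact hi.ne' hv
  refine le_of_mul_le_mul_right ?_ hi
  calc lam * x i ≤ (A *ᵥ x) i := hle i
    _ = ∑ j ∈ univ.erase v, A i j * x j := by
      rw [mulVec, dotProduct, ← add_sum_erase _ _ (mem_univ v), hv, mul_zero, zero_add]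
    _ ≤ ∑ j ∈ univ.erase v, A i j * x i :=
      sum_le_sum fun j _ => mul_le_mul_of_nonneg_left (hmax j (mem_univ j)) (hA i j)
    _ ≤ c * x i := by rw [← sum_mul]; exact mul_le_mul_of_nonneg_right (hc i hiv) hi.le

end ParetoEigenpair

theorem Matrix.IsSymm.eq_of_mulVec_eq_smul_of_pos {ι : Type*} [Fintype ι]
    {A : Matrix ι ι ℝ} (hA : A.IsSymm) {x y : ι → ℝ} {lam μ : ℝ} (hx : x ≠ 0)
    (hx0 : ∀ i, 0 ≤ x i) (hy : ∀ i, 0 < y i) (hAx : A *ᵥ x = lam • x) (hAy : A *ᵥ y = μ • y) :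
    lam = μ := by
  have hyx : 0 < y ⬝ᵥ x := by
    obtain ⟨w, hw⟩ := Function.ne_iff.mp hx
    exact sum_pos' (fun i _ => mul_nonneg (hy i).le (hx0 i))
      ⟨w, mem_univ w, mul_pos (hy w) ((hx0 w).lt_of_ne (Ne.symm hw))⟩
  have : lam * (y ⬝ᵥ x) = μ * (y ⬝ᵥ x) := by
    calc lam * (y ⬝ᵥ x) = y ⬝ᵥ A *ᵥ x := by rw [hAx, dotProduct_smul, smul_eq_mul]
      _ = (A *ᵥ y) ⬝ᵥ x := by rw [dotProduct_mulVec, ← mulVec_transpose, hA.eq]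
      _ = μ * (y ⬝ᵥ x) := by rw [hAy, smul_dotProduct, smul_eq_mul]
  exact mul_right_cancel₀ hyx.ne' this

namespace SimpleGraph

variable {V : Type*} {G : SimpleGraph V}

theorem dist_eq_two_of_not_adj {c i j : V} (hic : G.Adj i c) (hcj : G.Adj c j) (hij : i ≠ j)
    (h : ¬G.Adj i j) : G.dist i j = 2 := by
  have hle : G.dist i j ≤ 2 := dist_le (.cons hic (.cons hcj .nil))
  have hpos : 0 < G.dist i j := (Walk.cons hic (.cons hcj .nil)).reachable.pos_dist_of_ne hij
  have hne : G.dist i j ≠ 1 := fun h1 => h (dist_eq_one_iff_adj.mp h1)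
  omega

/-- With a universal vertex every distance between distinct vertices is `1` or `2`, so
`d(i, j) + [i ~ j] = 2` for `j ≠ i`. -/
theorem IsUniversal.sum_dist_add_degree [Fintype V] [DecidableEq V] [DecidableRel G.Adj]
    {c : V} (hc : G.IsUniversal c) (i : V) :
    ∑ j, G.dist i j + G.degree i = 2 * (Fintype.card V - 1) := by
  have hterm : ∀ j, G.dist i j + (if G.Adj i j then 1 else 0) = if i = j then 0 else 2 := by
    intro j
    by_cases hij : i = j
    · subst hij; simp
    by_cases hadj : G.Adj i j
    · simp [hij, hadj, dist_eq_one_iff_adj.mpr hadj]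
    have hic : i ≠ c := by rintro rfl; exact hadj (hc hij)
    have hjc : j ≠ c := by rintro rfl; exact hadj (hc (Ne.symm hic)).symm
    simp [hij, hadj, dist_eq_two_of_not_adj (hc (Ne.symm hic)).symm (hc (Ne.symm hjc)) hij hadj]
  rw [← card_neighborFinset_eq_degree, neighborFinset_eq_filter, card_filter,
    ← sum_add_distrib, Finset.sum_congr rfl fun j _ => hterm j, sum_ite, sum_const_zero,
    sum_const, filter_ne, card_erase_of_mem (mem_univ i), card_univ, smul_eq_mul, zero_add,
    mul_comm]

theorem IsUniversal.reachable {c : V} (hc : G.IsUniversal c) (i j : V) : G.Reachable i j := by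
  have hreach : ∀ w, G.Reachable c w := fun w => by
    by_cases hw : c = w
    · exact hw ▸ Reachable.refl c
    · exact (hc hw).reachable
  exact (hreach i).symm.trans (hreach j)

end SimpleGraph

theorem distMatrix_isSymm {n : ℕ} (G : SimpleGraph (Fin n)) : (distMatrix G).IsSymm :=
  Matrix.IsSymm.ext fun i j => by simp [distMatrix, SimpleGraph.dist_comm]

theorem mulVec_ite_one_apply {ι : Type*} [Fintype ι] [DecidableEq ι] (A : Matrix ι ι ℝ) (c : ι)
    (a : ℝ) (i : ι) :
    (A *ᵥ fun j => if j = c then a else 1) i = ∑ j, A i j + (a - 1) * A i c := by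
  simp only [mulVec, dotProduct, mul_ite, mul_one]
  rw [← add_sum_erase _ _ (mem_univ c), ← add_sum_erase _ (fun j => A i j) (mem_univ c),
    if_pos rfl, sum_congr rfl fun j hj => if_neg (ne_of_mem_erase hj)]
  ring

section Wheel

variable {n : ℕ}

instance : DecidableRel (wheelGraph n).Adj := fun _ _ => inferInstanceAs (Decidable (_ ∧ _))

theorem wheelGraph_isUniversal {c : Fin n} (hc : c.val = 0) : (wheelGraph n).IsUniversal c :=
  fun _ h => ⟨h, .inl hc⟩

theorem wheelGraph_degree_of_val_ne_zero (hn : 4 ≤ n) {i : Fin n} (hi : i.val ≠ 0) :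
    (wheelGraph n).degree i = 3 := by
  have hi' := i.isLt
  rw [← card_neighborFinset_eq_degree, card_eq_three]
  refine ⟨⟨0, by omega⟩, ⟨if i.val = n - 1 then 1 else i.val + 1, by split_ifs <;> omega⟩,
    ⟨if i.val = 1 then n - 1 else i.val - 1, by split_ifs <;> omega⟩, ?_, ?_, ?_, ?_⟩
  iterate 3 exact Fin.ne_of_val_ne (by grind)
  ext j
  have := j.isLt
  simp only [mem_neighborFinset, mem_insert, mem_singleton]
  simp only [wheelGraph, ne_eq, Fin.ext_iff]
  grind

theorem wheelGraph_sum_dist (hn : 4 ≤ n) {c : Fin n} (hc : c.val = 0) (i : Fin n) :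
    ∑ j, ((wheelGraph n).dist i j : ℝ) = if i = c then (n : ℝ) - 1 else 2 * (n : ℝ) - 5 := by
  have hsum := (wheelGraph_isUniversal hc).sum_dist_add_degree i
  rw [Fintype.card_fin] at hsum
  split_ifs with hic
  · rw [hic] at hsum ⊢
    rw [((wheelGraph n).degree_eq_card_sub_one c).mpr (wheelGraph_isUniversal hc),
      Fintype.card_fin] at hsum
    rw [← Nat.cast_sum, show ∑ j, (wheelGraph n).dist c j = n - 1 by omega]
    push_cast [show 1 ≤ n by omega]
    ring
  · rw [wheelGraph_degree_of_val_ne_zero hn fun h => hic (Fin.ext (h.trans hc.symm))] at hsum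
    rw [← Nat.cast_sum, show ∑ j, (wheelGraph n).dist i j = 2 * n - 5 by omega]
    push_cast [show 5 ≤ 2 * n by omega]
    ring

theorem distMatrix_wheelGraph_mulVec (hn : 4 ≤ n) {c : Fin n} (hc : c.val = 0) (a : ℝ)
    (i : Fin n) : (distMatrix (wheelGraph n) *ᵥ fun j => if j = c then a else 1) i =
      if i = c then (n : ℝ) - 1 else a + 2 * ((n : ℝ) - 3) := by
  rw [mulVec_ite_one_apply]
  simp only [distMatrix, wheelGraph_sum_dist hn hc]
  split_ifs with hic
  · simp [hic]
  · rw [dist_eq_one_iff_adj.mpr (wheelGraph_isUniversal hc (Ne.symm hic)).symm]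
    push_cast
    ring

theorem isParetoEigenpair_wheelGraph (hn : 4 ≤ n) {c : Fin n} (hc : c.val = 0) {a : ℝ}
    (ha : 0 ≤ a) (hle : (a + 2 * ((n : ℝ) - 3)) * a ≤ n - 1)
    (hcompl : a * ((n : ℝ) - 1 - (a + 2 * ((n : ℝ) - 3)) * a) = 0) :
    IsParetoEigenpair (distMatrix (wheelGraph n)) (a + 2 * ((n : ℝ) - 3))
      fun j => if j = c then a else 1 := by
  refine isParetoEigenpair_iff_complementarity.mpr ⟨?_, fun i => ?_, fun i => ?_, fun i => ?_⟩
  · have hrim : (⟨1, by omega⟩ : Fin n) ≠ c := fun h => by simp [← h] at hc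
    exact Function.ne_iff.mpr ⟨⟨1, by omega⟩, by simp [hrim]⟩
  · split_ifs
    exacts [ha, zero_le_one]
  · rw [distMatrix_wheelGraph_mulVec hn hc]
    split_ifs
    exacts [hle, (mul_one _).le]
  · rw [distMatrix_wheelGraph_mulVec hn hc]
    split_ifs
    exacts [hcompl, by ring]

theorem IsParetoEigenpair.wheelGraph_le_of_apply_eq_zero (hn : 4 ≤ n) {lam : ℝ} {x : Fin n → ℝ}
    (hp : IsParetoEigenpair (distMatrix (wheelGraph n)) lam x) {v : Fin n} (hv : x v = 0) :
    lam ≤ 2 * ((n : ℝ) - 3) := by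
  have hc : (⟨0, by omega⟩ : Fin n).val = 0 := rfl
  refine hp.le_of_apply_eq_zero (fun _ _ => Nat.cast_nonneg _) hv fun i hiv => ?_
  have hdist : (1 : ℝ) ≤ (wheelGraph n).dist i v := by
    exact_mod_cast ((wheelGraph_isUniversal hc).reachable i v).pos_dist_of_ne hiv
  have hrow : ∑ j, ((wheelGraph n).dist i j : ℝ) ≤ 2 * (n : ℝ) - 5 := by
    have : (4 : ℝ) ≤ n := by exact_mod_cast hn
    rw [wheelGraph_sum_dist hn hc]
    split_ifs <;> linarith
  calc ∑ j ∈ univ.erase v, distMatrix (wheelGraph n) i j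
      = ∑ j, ((wheelGraph n).dist i j : ℝ) - (wheelGraph n).dist i v :=
        sum_erase_eq_sub (mem_univ v)
    _ ≤ 2 * (n : ℝ) - 5 - 1 := by gcongr
    _ = 2 * ((n : ℝ) - 3) := by ring

end Wheel

theorem exists_pos_quadratic_root (b : ℝ) {c : ℝ} (hc : 0 < c) :
    ∃ a : ℝ, 0 < a ∧ (a + 2 * b) * a = c := by
  have hsq : √(b ^ 2 + c) ^ 2 = b ^ 2 + c := Real.sq_sqrt (by positivity)
  have hb : b < √(b ^ 2 + c) := Real.lt_sqrt_of_sq_lt (by linarith)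
  exact ⟨√(b ^ 2 + c) - b, by linarith, by linear_combination hsq⟩

theorem stmt1 (n : ℕ) (hn : 5 ≤ n) :
    IsKthLargest (distParetoSet (wheelGraph n)) 2 (2 * ((n : ℝ) - 3)) := by
  have hn4 : 4 ≤ n := by omega
  have hn' : (5 : ℝ) ≤ n := by exact_mod_cast hn
  let c : Fin n := ⟨0, by omega⟩
  obtain ⟨a, ha, hroot⟩ := exists_pos_quadratic_root ((n : ℝ) - 3) (by linarith : (0 : ℝ) < n - 1)
  have hperron := isParetoEigenpair_wheelGraph hn4 (c := c) rfl ha.le hroot.le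
    (by rw [hroot]; ring)
  have hsecond := isParetoEigenpair_wheelGraph hn4 (c := c) rfl le_rfl (by linarith)
    (by ring)
  rw [zero_add] at hsecond
  refine ⟨⟨_, hsecond⟩, ?_⟩
  suffices {μ ∈ distParetoSet (wheelGraph n) | 2 * ((n : ℝ) - 3) < μ} =
      {a + 2 * ((n : ℝ) - 3)} by rw [this, Set.ncard_singleton]
  ext μ
  constructor
  · rintro ⟨⟨y, hy⟩, hμ⟩
    have hynn : ∀ i, 0 ≤ y i := hy.2.1
    have hypos : ∀ i, 0 < y i := fun i =>
      (hynn i).lt_of_ne' fun h0 => hμ.not_ge (hy.wheelGraph_le_of_apply_eq_zero hn4 h0)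
    have hxpos : ∀ i, 0 < (fun j => if j = c then a else 1 : Fin n → ℝ) i := fun i => by
      dsimp only
      split_ifs
      exacts [ha, one_pos]
    exact (distMatrix_isSymm _).eq_of_mulVec_eq_smul_of_pos hy.1 hynn hxpos
      (hy.mulVec_eq_of_pos hypos) (hperron.mulVec_eq_of_pos hxpos)
  · rintro rfl
    exact ⟨⟨_, hperron⟩, by linarith⟩
end

section
/- For any connected graph G with at least 3 vertices, the smallest three distance Pareto eigenvalues of G are 0, 1 and 2; that is, μ₁(G) = 0, μ₂(G) = 1 and μ₃(G) = 2. -/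
open Matrix SimpleGraph

/-!
Let `x` be a Pareto eigenvector of `D = D(G)` for `λ`, with support `S`. Complementary slackness
gives `(D x)ᵢ = λ xᵢ` on `S`. If `S = {a}` this reads `λ xₐ = 0`; if `S = {a, b}` it gives
`λ (xₐ + x_b) = d(a, b) (xₐ + x_b)`; and otherwise, as off-diagonal distances are at least `1`,
`λ ≥ |S| - 1 ≥ 2`. Hence `Π(G)` lies in `{0, 1} ∪ [2, ∞)`. Conversely, indicator vectors of a
vertex, of an edge, and of a triangle or a pair of vertices at distance two realise `0`, `1`, `2`.
-/

namespace IsParetoEigenpair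

variable {n : ℕ} {A : Matrix (Fin n) (Fin n) ℝ} {lam : ℝ} {x : Fin n → ℝ}

noncomputable def posSupport (x : Fin n → ℝ) : Finset (Fin n) := {i | 0 < x i}

lemma mem_posSupport {i : Fin n} : i ∈ posSupport x ↔ 0 < x i := by
  simp [posSupport]

lemma posSupport_nonempty (h : IsParetoEigenpair A lam x) : (posSupport x).Nonempty := by
  obtain ⟨i, hi⟩ := Function.ne_iff.mp h.1
  exact ⟨i, mem_posSupport.mpr ((h.2.1 i).lt_of_ne' hi)⟩

lemma mulVec_apply_eq_sum_posSupport (h : IsParetoEigenpair A lam x) (i : Fin n) :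
    (A *ᵥ x) i = ∑ j ∈ posSupport x, A i j * x j := by
  rw [posSupport, Finset.sum_filter]
  refine (Finset.sum_congr rfl fun j _ => ?_ : ∑ j, A i j * x j = _)
  split_ifs with hj
  · rfl
  · rw [le_antisymm (not_lt.mp hj) (h.2.1 j), mul_zero]

/-- Complementary slackness: `∑ xᵢ ((A x)ᵢ - λ xᵢ) = xᵀAx - λ xᵀx = 0` is a sum of nonnegative
terms, so equality holds on the support. -/
lemma mulVec_apply_eq_of_pos (h : IsParetoEigenpair A lam x) {i : Fin n} (hi : 0 < x i) :
    (A *ᵥ x) i = lam * x i := by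
  obtain ⟨hx0, hxnn, hineq, hlam⟩ := h
  have hxx : x ⬝ᵥ x ≠ 0 := mt dotProduct_self_eq_zero.mp hx0
  have hsum : ∑ j, x j * ((A *ᵥ x) j - lam * x j) = 0 := by
    simp only [mul_sub, Finset.sum_sub_distrib, mul_left_comm _ lam, ← Finset.mul_sum]
    change x ⬝ᵥ (A *ᵥ x) - lam * (x ⬝ᵥ x) = 0
    rw [hlam, div_mul_cancel₀ _ hxx, sub_self]
  have hterm := (Finset.sum_eq_zero_iff_of_nonneg fun j _ =>
    mul_nonneg (hxnn j) (sub_nonneg.mpr (hineq j))).mp hsum i (Finset.mem_univ i)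
  linarith [(mul_eq_zero.mp hterm).resolve_left hi.ne']

lemma eq_zero_of_posSupport_eq_singleton (h : IsParetoEigenpair A lam x) {a : Fin n}
    (haa : A a a = 0) (hS : posSupport x = {a}) : lam = 0 := by
  have ha : 0 < x a := mem_posSupport.mp (hS ▸ Finset.mem_singleton_self a)
  have := h.mulVec_apply_eq_of_pos ha
  rw [h.mulVec_apply_eq_sum_posSupport, hS, Finset.sum_singleton, haa, zero_mul] at this
  exact (mul_eq_zero.mp this.symm).resolve_right ha.ne'

lemma eq_of_posSupport_eq_pair (h : IsParetoEigenpair A lam x) {a b : Fin n} (hab : a ≠ b)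
    (haa : A a a = 0) (hbb : A b b = 0) (hba : A b a = A a b) (hS : posSupport x = {a, b}) :
    lam = A a b := by
  have ha : 0 < x a := mem_posSupport.mp (by simp [hS])
  have hb : 0 < x b := mem_posSupport.mp (by simp [hS])
  have hrow : ∀ i, (A *ᵥ x) i = A i a * x a + A i b * x b := fun i => by
    rw [h.mulVec_apply_eq_sum_posSupport, hS, Finset.sum_pair hab]
  have hxa := h.mulVec_apply_eq_of_pos ha
  have hxb := h.mulVec_apply_eq_of_pos hb
  rw [hrow, haa] at hxa
  rw [hrow, hbb, hba] at hxb
  have : lam * (x a + x b) = A a b * (x a + x b) := by linarith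
  exact mul_right_cancel₀ (by positivity) this

/-- For `i` in the support `S`, `λ xᵢ = (A x)ᵢ ≥ s - xᵢ` with `s = ∑_S xⱼ`; summing over `S` gives
`λ s ≥ (|S| - 1) s`. -/
lemma card_posSupport_sub_one_le (h : IsParetoEigenpair A lam x) (hA : ∀ i j, 0 ≤ A i j)
    (hoff : ∀ i j, i ≠ j → 1 ≤ A i j) : ((posSupport x).card : ℝ) - 1 ≤ lam := by
  set S := posSupport x
  set s := ∑ j ∈ S, x j
  have hs : 0 < s := Finset.sum_pos (fun j hj => mem_posSupport.mp hj) h.posSupport_nonempty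
  have hrow : ∀ i ∈ S, s - x i ≤ lam * x i := fun i hi =>
    calc s - x i = ∑ j ∈ S.erase i, x j := (Finset.sum_erase_eq_sub hi).symm
      _ ≤ ∑ j ∈ S.erase i, A i j * x j := Finset.sum_le_sum fun j hj =>
          le_mul_of_one_le_left (h.2.1 j) (hoff i j (Finset.ne_of_mem_erase hj).symm)
      _ ≤ ∑ j ∈ S, A i j * x j := Finset.sum_le_sum_of_subset_of_nonneg (Finset.erase_subset i S)
          fun j _ _ => mul_nonneg (hA i j) (h.2.1 j)
      _ = lam * x i := by
          rw [← h.mulVec_apply_eq_sum_posSupport, h.mulVec_apply_eq_of_pos (mem_posSupport.mp hi)]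
  have hsum : ((S.card : ℝ) - 1) * s ≤ lam * s :=
    calc ((S.card : ℝ) - 1) * s = ∑ i ∈ S, (s - x i) := by
          rw [Finset.sum_sub_distrib, Finset.sum_const, nsmul_eq_mul]; ring
      _ ≤ ∑ i ∈ S, lam * x i := Finset.sum_le_sum hrow
      _ = lam * s := (Finset.mul_sum S x lam).symm
  exact le_of_mul_le_mul_right hsum hs

end IsParetoEigenpair

/-- Witnessed by the indicator vector of `T`. -/
lemma isParetoEigenvalue_of_sum_eq {n : ℕ} {A : Matrix (Fin n) (Fin n) ℝ}
    (hA : ∀ i j, 0 ≤ A i j) {T : Finset (Fin n)} (hT : T.Nonempty) {lam : ℝ}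
    (hrow : ∀ i ∈ T, ∑ j ∈ T, A i j = lam) : IsParetoEigenvalue A lam := by
  set e : Fin n → ℝ := fun j => if j ∈ T then 1 else 0
  have hmulVec : ∀ i, (A *ᵥ e) i = ∑ j ∈ T, A i j := fun i => by
    simp [e, mulVec, dotProduct, mul_ite, Finset.sum_ite_mem]
  have hdot : ∀ y : Fin n → ℝ, e ⬝ᵥ y = ∑ j ∈ T, y j := fun y => by
    simp [e, dotProduct, ite_mul, Finset.sum_ite_mem]
  obtain ⟨a, ha⟩ := hT
  refine ⟨e, fun he => by simpa [e, ha] using congrFun he a, fun i => by positivity, fun i => ?_, ?_⟩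
  · rw [hmulVec]
    by_cases hi : i ∈ T
    · simp [e, hi, hrow i hi]
    · simpa [e, hi] using Finset.sum_nonneg fun j _ => hA i j
  · have hcard : (T.card : ℝ) ≠ 0 := by exact_mod_cast Finset.card_ne_zero_of_mem ha
    rw [hdot, hdot, Finset.sum_congr rfl fun i hi => (hmulVec i).trans (hrow i hi)]
    simp [e, Finset.sum_const, hcard]

section distMatrix

variable {n : ℕ} {G : SimpleGraph (Fin n)}

lemma distMatrix_nonneg (i j : Fin n) : 0 ≤ distMatrix G i j := Nat.cast_nonneg _

@[simp]
lemma distMatrix_self (i : Fin n) : distMatrix G i i = 0 := by simp [distMatrix]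

lemma distMatrix_comm (i j : Fin n) : distMatrix G i j = distMatrix G j i := by
  simp [distMatrix, dist_comm]

lemma distMatrix_of_adj {i j : Fin n} (h : G.Adj i j) : distMatrix G i j = 1 := by
  simp [distMatrix, dist_eq_one_iff_adj.mpr h]

lemma one_le_distMatrix (hG : G.Connected) {i j : Fin n} (hij : i ≠ j) : 1 ≤ distMatrix G i j :=
  Nat.one_le_cast.mpr (hG.pos_dist_of_ne hij)

lemma eq_zero_or_eq_one_or_two_le_of_mem_distParetoSet (hG : G.Connected) {lam : ℝ}
    (h : lam ∈ distParetoSet G) : lam = 0 ∨ lam = 1 ∨ 2 ≤ lam := by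
  obtain ⟨x, hx⟩ := h
  have hcard := hx.card_posSupport_sub_one_le distMatrix_nonneg fun i j => one_le_distMatrix hG
  rcases Nat.lt_or_ge (IsParetoEigenpair.posSupport x).card 3 with hlt | hge
  · rcases (Nat.succ_le_of_lt hx.posSupport_nonempty.card_pos).eq_or_lt with hone | hgt
    · obtain ⟨a, hS⟩ := Finset.card_eq_one.mp hone.symm
      exact Or.inl (hx.eq_zero_of_posSupport_eq_singleton (distMatrix_self a) hS)
    · have h2 : (IsParetoEigenpair.posSupport x).card = 2 := by omega
      obtain ⟨a, b, hab, hS⟩ := Finset.card_eq_two.mp h2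
      rw [hx.eq_of_posSupport_eq_pair hab (distMatrix_self a) (distMatrix_self b)
        (distMatrix_comm b a) hS]
      have hd : 1 ≤ G.dist a b := hG.pos_dist_of_ne hab
      rcases hd.eq_or_lt with hd1 | hd2
      · exact Or.inr (Or.inl (by simp [distMatrix, ← hd1]))
      · exact Or.inr (Or.inr (by simp only [distMatrix]; exact_mod_cast Nat.succ_le_of_lt hd2))
  · have : (3 : ℝ) ≤ (IsParetoEigenpair.posSupport x).card := by exact_mod_cast hge
    exact Or.inr (Or.inr (by linarith))

lemma zero_mem_distParetoSet (hn : 0 < n) : (0 : ℝ) ∈ distParetoSet G :=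
  isParetoEigenvalue_of_sum_eq distMatrix_nonneg (Finset.singleton_nonempty ⟨0, hn⟩)
    fun i hi => by simp [Finset.mem_singleton.mp hi]

lemma mem_distParetoSet_of_dist_eq {i j : Fin n} (hij : i ≠ j) :
    (G.dist i j : ℝ) ∈ distParetoSet G :=
  isParetoEigenvalue_of_sum_eq distMatrix_nonneg (Finset.insert_nonempty i {j}) fun k hk => by
    rw [Finset.sum_pair hij]
    simp only [Finset.mem_insert, Finset.mem_singleton] at hk
    rcases hk with rfl | rfl
    · simp [distMatrix]
    · simp [distMatrix, dist_comm]

lemma one_mem_distParetoSet (hn : 2 ≤ n) (hG : G.Connected) : (1 : ℝ) ∈ distParetoSet G := by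
  have : Nontrivial (Fin n) := Fin.nontrivial_iff_two_le.mpr hn
  obtain ⟨j, hij⟩ := hG.preconnected.exists_adj_of_nontrivial ⟨0, by omega⟩
  simpa [dist_eq_one_iff_adj.mpr hij] using mem_distParetoSet_of_dist_eq (G := G) hij.ne

lemma two_mem_distParetoSet_of_triangle {a b c : Fin n} (hab : G.Adj a b) (hac : G.Adj a c)
    (hbc : G.Adj b c) : (2 : ℝ) ∈ distParetoSet G := by
  refine isParetoEigenvalue_of_sum_eq distMatrix_nonneg (Finset.insert_nonempty a {b, c})
    fun i hi => ?_
  rw [Finset.sum_insert (by simp [hab.ne, hac.ne]), Finset.sum_pair hbc.ne]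
  simp only [Finset.mem_insert, Finset.mem_singleton] at hi
  rcases hi with rfl | rfl | rfl
  · rw [distMatrix_self, distMatrix_of_adj hab, distMatrix_of_adj hac]; norm_num
  · rw [distMatrix_of_adj hab.symm, distMatrix_self, distMatrix_of_adj hbc]; norm_num
  · rw [distMatrix_of_adj hac.symm, distMatrix_of_adj hbc.symm, distMatrix_self]; norm_num

end distMatrix

/-- The first three vertices of a shortest path between non-adjacent vertices. -/
lemma SimpleGraph.Connected.exists_dist_eq_two {V : Type*} {G : SimpleGraph V} (hG : G.Connected)
    {u v : V} (huv : u ≠ v) (hnadj : ¬G.Adj u v) : ∃ a b, a ≠ b ∧ G.dist a b = 2 := by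
  obtain ⟨p, hp⟩ := hG.exists_walk_length_eq_dist u v
  obtain ⟨a, c, b, hac, hcb, hnab, hab⟩ :=
    p.exists_adj_adj_not_adj_ne hp (hG.one_lt_dist_of_ne_of_not_adj huv hnadj)
  have hle : G.dist a b ≤ 2 := dist_le (.cons hac (.cons hcb .nil))
  exact ⟨a, b, hab, le_antisymm hle (hG.one_lt_dist_of_ne_of_not_adj hab hnab)⟩

/-- A connected graph on at least three vertices contains a triangle or a pair at distance two. -/
lemma two_mem_distParetoSet {n : ℕ} (hn : 3 ≤ n) {G : SimpleGraph (Fin n)} (hG : G.Connected) :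
    (2 : ℝ) ∈ distParetoSet G := by
  by_cases hcomplete : ∀ u v : Fin n, u ≠ v → G.Adj u v
  · exact two_mem_distParetoSet_of_triangle (a := ⟨0, by omega⟩) (b := ⟨1, by omega⟩)
      (c := ⟨2, by omega⟩) (hcomplete _ _ (by simp)) (hcomplete _ _ (by simp))
      (hcomplete _ _ (by simp))
  · push Not at hcomplete
    obtain ⟨u, v, huv, hnadj⟩ := hcomplete
    obtain ⟨a, b, hab, hd⟩ := hG.exists_dist_eq_two huv hnadj
    simpa [hd] using mem_distParetoSet_of_dist_eq (G := G) hab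

lemma isKthSmallest_zero_one_two {S : Set ℝ} (h0 : 0 ∈ S) (h1 : 1 ∈ S) (h2 : 2 ∈ S)
    (hS : ∀ y ∈ S, y = 0 ∨ y = 1 ∨ 2 ≤ y) :
    IsKthSmallest S 1 0 ∧ IsKthSmallest S 2 1 ∧ IsKthSmallest S 3 2 := by
  have hlt0 : {y ∈ S | y < 0} = ∅ := Set.eq_empty_of_forall_notMem fun y ⟨hy, hy0⟩ => by
    rcases hS y hy with rfl | rfl | h <;> linarith
  have hlt1 : {y ∈ S | y < 1} = {0} := Set.ext fun y =>
    ⟨fun ⟨hy, hy1⟩ => by rcases hS y hy with rfl | rfl | h <;> first | rfl | linarith,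
      fun hy => ⟨hy ▸ h0, by simp [Set.mem_singleton_iff.mp hy]⟩⟩
  have hlt2 : {y ∈ S | y < 2} = {0, 1} := Set.ext fun y =>
    ⟨fun ⟨hy, hy2⟩ => by rcases hS y hy with rfl | rfl | h <;> first | linarith | simp,
      fun hy => by rcases hy with rfl | rfl <;> exact ⟨‹_›, by norm_num⟩⟩
  refine ⟨⟨h0, ?_⟩, ⟨h1, ?_⟩, ⟨h2, ?_⟩⟩
  · simp [hlt0]
  · simp [hlt1]
  · rw [hlt2, Set.ncard_pair zero_ne_one]

theorem stmt12 (n : ℕ) (hn : 3 ≤ n) (G : SimpleGraph (Fin n)) (hG : G.Connected) :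
    IsKthSmallest (distParetoSet G) 1 0 ∧
    IsKthSmallest (distParetoSet G) 2 1 ∧
    IsKthSmallest (distParetoSet G) 3 2 :=
  isKthSmallest_zero_one_two (zero_mem_distParetoSet (by omega))
    (one_mem_distParetoSet (by omega) hG) (two_mem_distParetoSet hn hG)
    fun _ => eq_zero_or_eq_one_or_two_le_of_mem_distParetoSet hG
end
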